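/- arXiv:1609.07652 — 2 statements merged into one kernel-verified Lean document; each statement's English description precedes it below -/
import Mathlib

section
/- Let κ, m, α, a ∈ ℝ with α ≠ 0. Let φ : ℝ → ℝ → ℝ be C² on ℝ² and satisfy φ_t(t,z) + κ·φ_zz(t,z) + a·φ_z(t,z) = 0 for all (t,z) ∈ ℝ². Suppose u : ℝ → ℝ → ℝ is C² on ℝ × (0,∞), α + u_r(t,r) ≠ 0 for all t ∈ ℝ and r > 0, and u satisfies u_t(t,r) = κ·(u_rr(t,r) − (m/r)·(α + u_r(t,r)))/(α + u_r(t,r))² + a for all t ∈ ℝ and r > 0. Define T(t,r) = r^m·φ(t, α·r + u(t,r)) and X(t,r) = κ·r^m·φ_z(t, α·r + u(t,r))/(α + u_r(t,r)). Then ∂T/∂t(t,r) + ∂X/∂r(t,r) = 0 for all t ∈ ℝ and r > 0. -/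
/-!
Write `z = α r + u(t, r)` and `q = u_r`. By the chain rule,
`∂T/∂t = r^m (φ_t + u_t φ_z)` and
`∂X/∂r = κ (m r^(m-1) φ_z + r^m (α + q) φ_zz) / (α + q) - κ r^m u_rr φ_z / (α + q)²`.
Substituting the equation for `u_t`, the terms with `u_rr` and with `m r^(m-1)` cancel, leaving
`∂T/∂t + ∂X/∂r = r^m (φ_t + κ φ_zz + a φ_z)(t, z)`, which vanishes by the equation for `φ`.
-/

noncomputable section

/-- Partial derivative in the first (time) variable. -/
def partial_t (u : ℝ → ℝ → ℝ) (t r : ℝ) : ℝ := deriv (fun s => u s r) t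

/-- Partial derivative in the second (space) variable. -/
def partial_r (u : ℝ → ℝ → ℝ) (t r : ℝ) : ℝ := deriv (fun s => u t s) r

/-- Second partial derivative in the second (space) variable. -/
def partial_rr (u : ℝ → ℝ → ℝ) (t r : ℝ) : ℝ := deriv (deriv (fun s => u t s)) r

/-- Mixed partial derivative: first in space, then in time. -/
def partial_tr (u : ℝ → ℝ → ℝ) (t r : ℝ) : ℝ := deriv (fun s => deriv (fun y => u s y) r) t

/-- `u` is C² on ℝ × (0,∞): `u`, `u_t`, `u_r`, `u_rr` and the mixed partial `u_tr`
exist and are continuous there. -/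
def IsC2On (u : ℝ → ℝ → ℝ) : Prop :=
  (∀ t r : ℝ, 0 < r → DifferentiableAt ℝ (fun s => u s r) t) ∧
  (∀ t r : ℝ, 0 < r → DifferentiableAt ℝ (fun s => u t s) r) ∧
  (∀ t r : ℝ, 0 < r → DifferentiableAt ℝ (deriv (fun s => u t s)) r) ∧
  (∀ t r : ℝ, 0 < r → DifferentiableAt ℝ (fun s => deriv (fun y => u s y) r) t) ∧
  ContinuousOn (fun q : ℝ × ℝ => u q.1 q.2) {q : ℝ × ℝ | 0 < q.2} ∧
  ContinuousOn (fun q : ℝ × ℝ => partial_t u q.1 q.2) {q : ℝ × ℝ | 0 < q.2} ∧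
  ContinuousOn (fun q : ℝ × ℝ => partial_r u q.1 q.2) {q : ℝ × ℝ | 0 < q.2} ∧
  ContinuousOn (fun q : ℝ × ℝ => partial_rr u q.1 q.2) {q : ℝ × ℝ | 0 < q.2} ∧
  ContinuousOn (fun q : ℝ × ℝ => partial_tr u q.1 q.2) {q : ℝ × ℝ | 0 < q.2}

open Function

def conservedDensity (m α : ℝ) (φ u : ℝ → ℝ → ℝ) (t r : ℝ) : ℝ :=
  r ^ m * φ t (α * r + u t r)

def conservedFlux (κ m α : ℝ) (φ u : ℝ → ℝ → ℝ) (t r : ℝ) : ℝ :=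
  κ * r ^ m * partial_r φ t (α * r + u t r) / (α + partial_r u t r)

section PartialDerivatives

variable {φ : ℝ → ℝ → ℝ}

theorem hasDerivAt_uncurry_comp_fderiv {f g : ℝ → ℝ} {f' g' x : ℝ}
    (hφ : DifferentiableAt ℝ (uncurry φ) (f x, g x))
    (hf : HasDerivAt f f' x) (hg : HasDerivAt g g' x) :
    HasDerivAt (fun s => φ (f s) (g s)) (fderiv ℝ (uncurry φ) (f x, g x) (f', g')) x :=
  (hφ.hasFDerivAt.comp_hasDerivAt x (hf.prodMk hg) :)

theorem partial_t_eq_fderiv {a b : ℝ} (hφ : DifferentiableAt ℝ (uncurry φ) (a, b)) :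
    partial_t φ a b = fderiv ℝ (uncurry φ) (a, b) (1, 0) :=
  (hasDerivAt_uncurry_comp_fderiv (f := id) hφ (hasDerivAt_id a) (hasDerivAt_const a b)).deriv

theorem partial_r_eq_fderiv {a b : ℝ} (hφ : DifferentiableAt ℝ (uncurry φ) (a, b)) :
    partial_r φ a b = fderiv ℝ (uncurry φ) (a, b) (0, 1) :=
  (hasDerivAt_uncurry_comp_fderiv (g := id) hφ (hasDerivAt_const b a) (hasDerivAt_id b)).deriv

theorem ContinuousLinearMap.apply_prod_eq (L : ℝ × ℝ →L[ℝ] ℝ) (a b : ℝ) :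
    L (a, b) = a * L (1, 0) + b * L (0, 1) := by
  have h : ((a, b) : ℝ × ℝ) = a • ((1 : ℝ), (0 : ℝ)) + b • ((0 : ℝ), (1 : ℝ)) := by
    simp
  rw [h, L.map_add, L.map_smul, L.map_smul, smul_eq_mul, smul_eq_mul]

theorem hasDerivAt_uncurry_comp {f g : ℝ → ℝ} {f' g' x : ℝ}
    (hφ : DifferentiableAt ℝ (uncurry φ) (f x, g x))
    (hf : HasDerivAt f f' x) (hg : HasDerivAt g g' x) :
    HasDerivAt (fun s => φ (f s) (g s))
      (f' * partial_t φ (f x) (g x) + g' * partial_r φ (f x) (g x)) x := by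
  rw [partial_t_eq_fderiv hφ, partial_r_eq_fderiv hφ, ← ContinuousLinearMap.apply_prod_eq]
  exact hasDerivAt_uncurry_comp_fderiv hφ hf hg

theorem ContDiff.differentiable_uncurry_partial_r (hφ : ContDiff ℝ 2 (uncurry φ)) :
    Differentiable ℝ (uncurry (partial_r φ)) := by
  have hφ' : Differentiable ℝ (uncurry φ) := hφ.differentiable (by norm_num)
  have h : uncurry (partial_r φ) = fun p => fderiv ℝ (uncurry φ) p (0, 1) :=
    funext fun p => partial_r_eq_fderiv (hφ' p)
  rw [h]
  exact ((hφ.fderiv_right (m := 1) (by norm_num)).clm_apply contDiff_const).differentiable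
    one_ne_zero

end PartialDerivatives

section ConservationLaw

variable {κ m α a t r : ℝ} {φ u : ℝ → ℝ → ℝ}

theorem partial_t_conservedDensity
    (hφ : DifferentiableAt ℝ (uncurry φ) (t, α * r + u t r))
    (hu : DifferentiableAt ℝ (fun s => u s r) t) :
    partial_t (conservedDensity m α φ u) t r
      = r ^ m * (partial_t φ t (α * r + u t r)
          + partial_t u t r * partial_r φ t (α * r + u t r)) := by
  have h := hasDerivAt_uncurry_comp (f := id) hφ (hasDerivAt_id t)
    (hu.hasDerivAt.const_add (α * r))
  rw [one_mul] at h
  exact (h.const_mul (r ^ m)).deriv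

theorem partial_r_conservedFlux (hr : 0 < r)
    (hφ : DifferentiableAt ℝ (uncurry (partial_r φ)) (t, α * r + u t r))
    (hu : DifferentiableAt ℝ (fun s => u t s) r)
    (hu' : DifferentiableAt ℝ (deriv fun s => u t s) r)
    (hd : α + partial_r u t r ≠ 0) :
    partial_r (conservedFlux κ m α φ u) t r
      = κ * ((m * r ^ (m - 1) * partial_r φ t (α * r + u t r)
              + r ^ m * (α + partial_r u t r) * partial_rr φ t (α * r + u t r))
            * (α + partial_r u t r)
          - r ^ m * partial_r φ t (α * r + u t r) * partial_rr u t r)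
        / (α + partial_r u t r) ^ 2 := by
  have hz : HasDerivAt (fun s => α * s + u t s) (α + partial_r u t r) r := by
    simpa [partial_r] using ((hasDerivAt_id' r).const_mul α).fun_add hu.hasDerivAt
  have hφz := hasDerivAt_uncurry_comp hφ (hasDerivAt_const r t) hz
  have hrm := (Real.hasDerivAt_rpow_const (p := m) (Or.inl hr.ne')).const_mul κ
  have hden : HasDerivAt (fun s => α + partial_r u t s) (partial_rr u t r) r :=
    hu'.hasDerivAt.const_add α
  have hflux : HasDerivAt (fun s => conservedFlux κ m α φ u t s) _ r :=
    (hrm.fun_mul hφz).fun_div hden hd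
  rw [partial_r, hflux.deriv, show partial_rr φ = partial_r (partial_r φ) from rfl]
  ring

theorem partial_t_conservedDensity_add_partial_r_conservedFlux
    (hφ : ContDiff ℝ 2 (uncurry φ)) (hr : 0 < r)
    (hut : DifferentiableAt ℝ (fun s => u s r) t)
    (hur : DifferentiableAt ℝ (fun s => u t s) r)
    (hurr : DifferentiableAt ℝ (deriv fun s => u t s) r)
    (hd : α + partial_r u t r ≠ 0)
    (hpde : partial_t u t r
      = κ * (partial_rr u t r - (m / r) * (α + partial_r u t r))
          / (α + partial_r u t r) ^ 2 + a) :
    partial_t (conservedDensity m α φ u) t r + partial_r (conservedFlux κ m α φ u) t r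
      = r ^ m * (partial_t φ t (α * r + u t r) + κ * partial_rr φ t (α * r + u t r)
          + a * partial_r φ t (α * r + u t r)) := by
  rw [partial_t_conservedDensity (hφ.differentiable (by norm_num) _) hut,
    partial_r_conservedFlux hr (hφ.differentiable_uncurry_partial_r _) hur hurr hd,
    hpde, Real.rpow_sub_one hr.ne']
  field_simp
  ring

end ConservationLaw

theorem conservation_law_phi_family_alpha_general (κ m α a : ℝ)
    (φ : ℝ → ℝ → ℝ) (hφ : ContDiff ℝ 2 (Function.uncurry φ))
    (hlin : ∀ t z : ℝ, partial_t φ t z + κ * partial_rr φ t z + a * partial_r φ t z = 0)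
    (u : ℝ → ℝ → ℝ) (hu : IsC2On u)
    (hur : ∀ t r : ℝ, 0 < r → α + partial_r u t r ≠ 0)
    (hpde : ∀ t r : ℝ, 0 < r →
      partial_t u t r
        = κ * (partial_rr u t r - (m / r) * (α + partial_r u t r))
            / (α + partial_r u t r) ^ 2 + a)
    (T X : ℝ → ℝ → ℝ)
    (hT : ∀ t r : ℝ, T t r = r ^ m * φ t (α * r + u t r))
    (hX : ∀ t r : ℝ, X t r
      = κ * r ^ m * partial_r φ t (α * r + u t r) / (α + partial_r u t r)) :
    ∀ t r : ℝ, 0 < r → partial_t T t r + partial_r X t r = 0 := by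
  intro t r hr
  obtain ⟨hut, hur', hurr, -⟩ := hu
  have hT' : T = conservedDensity m α φ u := funext fun t => funext (hT t)
  have hX' : X = conservedFlux κ m α φ u := funext fun t => funext (hX t)
  rw [hT', hX', partial_t_conservedDensity_add_partial_r_conservedFlux hφ hr (hut t r hr)
    (hur' t r hr) (hurr t r hr) (hur t r hr) (hpde t r hr), hlin, mul_zero]

/-- Infinite family of conservation laws for the 1-dimensional nonlinear
diffusion-reaction equation with diffusivity `h(v) = -κ/(α+v)` and constant source `a`. -/
theorem conservation_law_phi_family_alpha (κ m α a : ℝ) (hα : α ≠ 0)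
    (φ : ℝ → ℝ → ℝ) (hφ : ContDiff ℝ 2 (Function.uncurry φ))
    (hlin : ∀ t z : ℝ, partial_t φ t z + κ * partial_rr φ t z + a * partial_r φ t z = 0)
    (u : ℝ → ℝ → ℝ) (hu : IsC2On u)
    (hur : ∀ t r : ℝ, 0 < r → α + partial_r u t r ≠ 0)
    (hpde : ∀ t r : ℝ, 0 < r →
      partial_t u t r
        = κ * (partial_rr u t r - (m / r) * (α + partial_r u t r))
            / (α + partial_r u t r) ^ 2 + a)
    (T X : ℝ → ℝ → ℝ)
    (hT : ∀ t r : ℝ, T t r = r ^ m * φ t (α * r + u t r))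
    (hX : ∀ t r : ℝ, X t r
      = κ * r ^ m * partial_r φ t (α * r + u t r) / (α + partial_r u t r)) :
    ∀ t r : ℝ, 0 < r → partial_t T t r + partial_r X t r = 0 :=
  conservation_law_phi_family_alpha_general κ m α a φ hφ hlin u hu hur hpde T X hT hX
end
end

section
/- Let h : ℝ → ℝ be differentiable and let b, m, ε ∈ ℝ. Suppose u : ℝ → ℝ → ℝ is C² on ℝ × (0,∞) and satisfies u_t(t,r) = h'(u_r(t,r))·u_rr(t,r) + (m/r)·h(u_r(t,r)) + b for all t ∈ ℝ and r > 0. Define v(t,r) = exp(ε)·((exp(ε) − 1)·b·exp(−2ε)·t + u(exp(−2ε)·t, exp(−ε)·r)). Then v satisfies the same equation, v_t(t,r) = h'(v_r(t,r))·v_rr(t,r) + (m/r)·h(v_r(t,r)) + b, for all t ∈ ℝ and r > 0. -/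
noncomputable section

def SolvesDiffusionReaction (h : ℝ → ℝ) (b m : ℝ) (u : ℝ → ℝ → ℝ) : Prop :=
  ∀ t r : ℝ, 0 < r →
    partial_t u t r = deriv h (partial_r u t r) * partial_rr u t r + (m / r) * h (partial_r u t r) + b

theorem deriv_const_mul_comp_mul (A c : ℝ) (g : ℝ → ℝ) :
    deriv (fun y => A * g (c * y)) = fun y => A * c * deriv g (c * y) := by
  funext y
  rw [deriv_const_mul_field, deriv_comp_mul_left, smul_eq_mul, mul_assoc]

section Rescale

variable (u : ℝ → ℝ → ℝ) (A k a c t r : ℝ)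

theorem partial_r_rescale :
    partial_r (fun s y => A * (k * (a * s) + u (a * s) (c * y))) t r
      = A * c * partial_r u (a * t) (c * r) := by
  simp only [partial_r, mul_add, deriv_const_add', deriv_const_mul_comp_mul]

theorem partial_rr_rescale :
    partial_rr (fun s y => A * (k * (a * s) + u (a * s) (c * y))) t r
      = A * c ^ 2 * partial_rr u (a * t) (c * r) := by
  simp only [partial_rr, mul_add, deriv_const_add', deriv_const_mul_comp_mul]
  ring

theorem partial_t_rescale (hu : DifferentiableAt ℝ (fun s => u s (c * r)) (a * t)) :
    partial_t (fun s y => A * (k * (a * s) + u (a * s) (c * y))) t r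
      = A * a * (k + partial_t u (a * t) (c * r)) := by
  have hscale : HasDerivAt (fun s => a * s) a t := by simpa using (hasDerivAt_id t).const_mul a
  have hcomp : HasDerivAt (fun s => u (a * s) (c * r)) (partial_t u (a * t) (c * r) * a) t :=
    hu.hasDerivAt.comp t hscale
  have hw : HasDerivAt (fun s => A * (k * (a * s) + u (a * s) (c * r)))
      (A * (k * a + partial_t u (a * t) (c * r) * a)) t :=
    ((hscale.const_mul k).add hcomp).const_mul A
  rw [partial_t, hw.deriv]
  ring

end Rescale

/-- Under `t ↦ κ⁻² t`, `r ↦ κ⁻¹ r` and multiplication by `κ`, `u_r` is unchanged while `u_t`,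
`u_rr` and `1 / r` all pick up the factor `κ⁻¹`; the drift `(κ - 1) b κ⁻² t` corrects the constant
source `b`, which does not scale. -/
theorem SolvesDiffusionReaction.rescale {h : ℝ → ℝ} {b m κ : ℝ} (hκ : 0 < κ)
    {u : ℝ → ℝ → ℝ} (hu : ∀ t r : ℝ, 0 < r → DifferentiableAt ℝ (fun s => u s r) t)
    (hpde : SolvesDiffusionReaction h b m u) :
    SolvesDiffusionReaction h b m
      (fun t r => κ * ((κ - 1) * b * (κ⁻¹ ^ 2 * t) + u (κ⁻¹ ^ 2 * t) (κ⁻¹ * r))) := by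
  intro t r hr
  have hr' : 0 < κ⁻¹ * r := by positivity
  rw [partial_t_rescale (hu := hu _ _ hr'), partial_r_rescale, partial_rr_rescale,
    hpde _ _ hr']
  field_simp
  ring

theorem symmetry_X5_general (h : ℝ → ℝ) (b m ε : ℝ)
    (u : ℝ → ℝ → ℝ) (hu : IsC2On u)
    (hpde : ∀ t r : ℝ, 0 < r →
      partial_t u t r = deriv h (partial_r u t r) * partial_rr u t r
        + (m / r) * h (partial_r u t r) + b)
    (v : ℝ → ℝ → ℝ)
    (hv : ∀ t r : ℝ,
      v t r = Real.exp ε * ((Real.exp ε - 1) * b * (Real.exp (-2 * ε) * t)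
        + u (Real.exp (-2 * ε) * t) (Real.exp (-ε) * r))) :
    ∀ t r : ℝ, 0 < r →
      partial_t v t r = deriv h (partial_r v t r) * partial_rr v t r
        + (m / r) * h (partial_r v t r) + b := by
  have hexp : Real.exp (-2 * ε) = (Real.exp ε)⁻¹ ^ 2 := by
    rw [← Real.exp_neg, ← Real.exp_nat_mul]; ring_nf
  obtain rfl : v = fun t r => Real.exp ε * ((Real.exp ε - 1) * b * ((Real.exp ε)⁻¹ ^ 2 * t)
      + u ((Real.exp ε)⁻¹ ^ 2 * t) ((Real.exp ε)⁻¹ * r)) := by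
    funext t r
    rw [hv, hexp, Real.exp_neg]
  exact SolvesDiffusionReaction.rescale (Real.exp_pos ε) hu.1 hpde

/-- The scaling and time-dependent-shift point symmetry X₅ of the 1-dimensional
nonlinear diffusion-reaction equation with constant source `b`. -/
theorem symmetry_X5 (h : ℝ → ℝ) (hh : Differentiable ℝ h) (b m ε : ℝ)
    (u : ℝ → ℝ → ℝ) (hu : IsC2On u)
    (hpde : ∀ t r : ℝ, 0 < r →
      partial_t u t r = deriv h (partial_r u t r) * partial_rr u t r
        + (m / r) * h (partial_r u t r) + b)
    (v : ℝ → ℝ → ℝ)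
    (hv : ∀ t r : ℝ,
      v t r = Real.exp ε * ((Real.exp ε - 1) * b * (Real.exp (-2 * ε) * t)
        + u (Real.exp (-2 * ε) * t) (Real.exp (-ε) * r))) :
    ∀ t r : ℝ, 0 < r →
      partial_t v t r = deriv h (partial_r v t r) * partial_rr v t r
        + (m / r) * h (partial_r v t r) + b :=
  symmetry_X5_general h b m ε u hu hpde v hv
end
end
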